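/- Define the polynomials H_n ∈ ℝ[p] by H_0 = 1 and H_n = (p/n) Σ_{k=1}^{n} (−1)^{k+1} B_k(1/2) H_{n−k} for n ≥ 1, where B_k(1/2) is the value of the k-th Bernoulli polynomial at 1/2 (so H_n(p) = G_n(p, 1/2), the sequence from the recursion G_n(p,t) = (p/n) Σ_{k=1}^{n} (−1)^{k+1} B_k(t) G_{n−k}(p,t) evaluated at t = 1/2, viewed as a polynomial in p). Then for every n ≥ 1, the polynomial H_{2n} has degree exactly n in p. -/

import Mathlib

/-!
Odd Bernoulli polynomials vanish at `1/2` (by `B_k(1 - x) = (-1)^k B_k(x)`), so only even `k`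
contribute to the recursion. Inductively the term `k = 2j` has degree `n - j`, hence the term
`k = 2` with `B_2(1/2) = -1/12 ≠ 0` strictly dominates the sum, which therefore has degree
`n - 1`; multiplying by `p/(2n)` gives degree `n`.
-/

open Finset Polynomial

/-- The `k`-th Bernoulli polynomial evaluated at a real number `t`
(generating function `u e^{tu}/(e^u - 1)`, so `B 1 t = t - 1/2`). -/
noncomputable def bern (k : ℕ) (t : ℝ) : ℝ :=
  Polynomial.aeval t (Polynomial.bernoulli k)

theorem Polynomial.degree_sum_eq_of_degree_lt {ι R : Type*} [Semiring R] [DecidableEq ι]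
    {s : Finset ι} {f : ι → R[X]} {i : ι} (hi : i ∈ s)
    (hlt : ∀ j ∈ s, j ≠ i → (f j).degree < (f i).degree) :
    (∑ j ∈ s, f j).degree = (f i).degree := by
  rw [← add_sum_erase s f hi]
  rcases (s.erase i).eq_empty_or_nonempty with hempty | ⟨j, hj⟩
  · simp [hempty]
  have hbot : ⊥ < (f i).degree :=
    bot_le.trans_lt (hlt j (mem_of_mem_erase hj) (ne_of_mem_erase hj))
  refine degree_add_eq_left_of_degree_lt ((degree_sum_le _ _).trans_lt ?_)
  exact (Finset.sup_lt_iff hbot).2 fun k hk => hlt k (mem_of_mem_erase hk) (ne_of_mem_erase hk)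

theorem bern_half_eq_eval (k : ℕ) :
    bern k (1 / 2) = (((Polynomial.bernoulli k).eval (1 / 2) : ℚ) : ℝ) := by
  rw [bern, show (1 / 2 : ℝ) = algebraMap ℚ ℝ (1 / 2) by norm_num]
  exact Polynomial.aeval_algebraMap_apply_eq_algebraMap_eval _ _

theorem bern_half_of_odd {k : ℕ} (hk : Odd k) : bern k (1 / 2) = 0 := by
  have hsymm := Polynomial.bernoulli_eval_one_sub k (1 / 2)
  rw [hk.neg_one_pow] at hsymm
  have hzero : (Polynomial.bernoulli k).eval (1 / 2 : ℚ) = 0 := by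
    norm_num at hsymm
    linarith
  rw [bern_half_eq_eval, hzero, Rat.cast_zero]

theorem bern_two_half : bern 2 (1 / 2) = -(1 / 12) := by
  rw [bern_half_eq_eval]
  norm_num [Polynomial.bernoulli_def, Finset.sum_range_succ, bernoulli_two, _root_.bernoulli_one]

theorem degree_two_mul_of_recursion {K : Type*} [Field K] [CharZero K] {c : ℕ → K}
    {H : ℕ → K[X]} (hc : ∀ k, Odd k → c k = 0) (hc2 : c 2 ≠ 0) (h0 : H 0 = 1)
    (hH : ∀ n, 1 ≤ n → H n = C (1 / (n : K)) * X * ∑ k ∈ Icc 1 n, C (c k) * H (n - k))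
    (n : ℕ) : (H (2 * n)).degree = n := by
  induction n using Nat.strong_induction_on with
  | _ n ih =>
  rcases Nat.eq_zero_or_pos n with rfl | hn
  · simp [h0]
  have hterm_two : (C (c 2) * H (2 * n - 2)).degree = (n - 1 : ℕ) := by
    rw [degree_C_mul hc2, show 2 * n - 2 = 2 * (n - 1) by omega, ih _ (by omega)]
  have hsum : (∑ k ∈ Icc 1 (2 * n), C (c k) * H (2 * n - k)).degree = (n - 1 : ℕ) := by
    rw [degree_sum_eq_of_degree_lt (i := 2) (mem_Icc.2 ⟨by norm_num, by omega⟩), hterm_two]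
    intro k hk hk2
    rw [hterm_two]
    rw [mem_Icc] at hk
    rcases Nat.even_or_odd k with ⟨j, rfl⟩ | hodd
    · refine (degree_mul_le _ _).trans_lt ?_
      rw [show 2 * n - (j + j) = 2 * (n - j) by omega, ih _ (by omega)]
      refine (add_le_add_left degree_C_le _).trans_lt ?_
      rw [zero_add]
      exact_mod_cast (show n - j < n - 1 by omega)
    · rw [hc k hodd, C_0, zero_mul, degree_zero]
      exact WithBot.bot_lt_coe _
  have hn' : (1 / ((2 * n : ℕ) : K)) ≠ 0 := one_div_ne_zero (Nat.cast_ne_zero.2 (by omega))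
  rw [hH _ (by omega), degree_mul, degree_C_mul_X hn', hsum]
  norm_cast
  omega

/-- viewing `Gₙ(p, 1/2)` as a polynomial `Hₙ ∈ ℝ[p]`
(`H₀ = 1`, `Hₙ = (p/n) ∑_{k=1}^n (-1)^{k+1} Bₖ(1/2) H_{n-k}`),
the polynomial `H_{2n}` has degree exactly `n` in `p`. -/
theorem H_even_degree
    (H : ℕ → Polynomial ℝ) (hH0 : H 0 = 1)
    (hH : ∀ n : ℕ, 1 ≤ n →
      H n = Polynomial.C (1 / (n : ℝ)) * Polynomial.X *
        ∑ k ∈ Finset.Icc 1 n,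
          Polynomial.C ((-1 : ℝ) ^ (k + 1) * bern k (1 / 2)) * H (n - k)) :
    ∀ n : ℕ, 1 ≤ n → (H (2 * n)).degree = n := by
  refine fun n _ => degree_two_mul_of_recursion (fun k hk => ?_) ?_ hH0 hH n
  · rw [bern_half_of_odd hk, mul_zero]
  · rw [bern_two_half]; norm_num
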